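/- arXiv:2312.04823 — 5 statements merged into one kernel-verified Lean document; each statement's English description precedes it below -/
import Mathlib

section
/- Let n ≥ 1 and let λ : Fin n → ℝ be the eigenvalues of the diffusion operator of an ergodic Markov chain, i.e. |λ 0| = 1 and |λ i| < 1 for all i ≠ 0. Then the diffusion spectral entropy tends to 0 as diffusion time tends to infinity: lim_{t → ∞} S(λ, t) = 0. -/
open Real Filter

/-- Diffusion spectral entropy of an eigenvalue list `lam` at diffusion time `t`:
`S(λ, t) = -∑ i, α_{i,t} log α_{i,t}` where `α_{i,t} = |λ_i|^t / ∑_j |λ_j|^t`. -/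
noncomputable def diffusionSpectralEntropy {ι : Type*} [Fintype ι] (lam : ι → ℝ) (t : ℝ) : ℝ :=
  -∑ i, (|lam i| ^ t / ∑ j, |lam j| ^ t) * Real.log (|lam i| ^ t / ∑ j, |lam j| ^ t)

/-! The weights `|λ_i|^t` converge to the indicator of the top eigenvalue, so the normalised
weights converge to a point mass, and the entropy — a continuous function of the weights
wherever their sum is nonzero — converges to the entropy of a point mass, which is `0`. -/

open Topology

theorem tendsto_abs_rpow_atTop_pi_single {ι : Type*} [DecidableEq ι] {lam : ι → ℝ} {i₀ : ι}
    (h0 : |lam i₀| = 1) (h1 : ∀ i, i ≠ i₀ → |lam i| < 1) :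
    Tendsto (fun (t : ℝ) i => |lam i| ^ t) atTop (𝓝 (Pi.single i₀ 1)) := by
  refine tendsto_pi_nhds.2 fun i => ?_
  rcases eq_or_ne i i₀ with rfl | hi
  · simp [h0]
  · rw [Pi.single_eq_of_ne hi]
    exact tendsto_rpow_atTop_of_base_lt_one _ (by linarith [abs_nonneg (lam i)]) (h1 i hi)

section

variable {ι : Type*} [Fintype ι]

theorem diffusionSpectralEntropy_eq_sum_negMulLog (lam : ι → ℝ) (t : ℝ) :
    diffusionSpectralEntropy lam t = ∑ i, negMulLog (|lam i| ^ t / ∑ j, |lam j| ^ t) := by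
  simp only [diffusionSpectralEntropy, negMulLog, neg_mul, Finset.sum_neg_distrib]

theorem tendsto_diffusionSpectralEntropy {lam : ι → ℝ} {l : Filter ℝ} {q : ι → ℝ}
    (h : Tendsto (fun (t : ℝ) i => |lam i| ^ t) l (𝓝 q)) (hq : ∑ i, q i ≠ 0) :
    Tendsto (diffusionSpectralEntropy lam) l (𝓝 (∑ i, negMulLog (q i / ∑ j, q j))) := by
  have hsum : Tendsto (fun t => ∑ j, |lam j| ^ t) l (𝓝 (∑ j, q j)) :=
    tendsto_finsetSum _ fun j _ => tendsto_pi_nhds.1 h j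
  simp_rw [funext (diffusionSpectralEntropy_eq_sum_negMulLog lam)]
  exact tendsto_finsetSum _ fun i _ =>
    (continuous_negMulLog.tendsto _).comp ((tendsto_pi_nhds.1 h i).div hsum hq)

variable [DecidableEq ι]

theorem sum_negMulLog_pi_single_one (i₀ : ι) :
    ∑ i, negMulLog ((Pi.single i₀ 1 : ι → ℝ) i) = 0 := by
  simp [Pi.single_apply, apply_ite negMulLog]

end

/-- For the eigenvalues of an ergodic Markov chain (one eigenvalue of modulus 1, all others of
modulus strictly less than 1), the diffusion spectral entropy tends to 0 as `t → ∞`. -/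
theorem dse_tendsto_zero_of_ergodic {n : ℕ} (hn : 1 ≤ n) (lam : Fin n → ℝ)
    (h0 : |lam ⟨0, hn⟩| = 1) (h1 : ∀ i : Fin n, i ≠ ⟨0, hn⟩ → |lam i| < 1) :
    Tendsto (fun t => diffusionSpectralEntropy lam t) atTop (nhds 0) := by
  have h := tendsto_diffusionSpectralEntropy (tendsto_abs_rpow_atTop_pi_single h0 h1) (by simp)
  simpa [sum_negMulLog_pi_single_one] using h
end

section
/- Let n ≥ 3 and 2 ≤ m ≤ n − 1, and let λ_1 ≥ λ_2 ≥ ⋯ ≥ λ_{m+1} ≥ 0 be reals with λ_1 > 0. Then φ_m(λ_1, …, λ_m) ≥ φ_{m+1}(λ_1, …, λ_m, λ_{m+1}). -/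
open Real Finset

/-- The functional `φ_m(λ_1, …, λ_m)` from the DSE upper-bound lemma: with
`S_m = (n − m + 1)·λ_m + ∑_{i=1}^{m−1} λ_i`,
`φ_m = −(n − m + 1)·(λ_m/S_m)·log(λ_m/S_m) − ∑_{i=1}^{m−1} (λ_i/S_m)·log(λ_i/S_m)`. -/
noncomputable def phi (n m : ℕ) (lam : ℕ → ℝ) : ℝ :=
  -((n : ℝ) - m + 1) *
      (lam m / (((n : ℝ) - m + 1) * lam m + ∑ i ∈ Finset.Icc 1 (m - 1), lam i)) *
      Real.log (lam m / (((n : ℝ) - m + 1) * lam m + ∑ i ∈ Finset.Icc 1 (m - 1), lam i)) -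
    ∑ i ∈ Finset.Icc 1 (m - 1),
      (lam i / (((n : ℝ) - m + 1) * lam m + ∑ j ∈ Finset.Icc 1 (m - 1), lam j)) *
        Real.log (lam i / (((n : ℝ) - m + 1) * lam m + ∑ j ∈ Finset.Icc 1 (m - 1), lam j))

/-! `φ_m` is the Shannon entropy `log S - (∑ w log w) / S` of the weights `λ_1, …, λ_{m-1}` together
with `n - m + 1` copies of `λ_m`, and `φ_{m+1}` arises by lowering `n - m` of those copies to
`λ_{m+1}`, which shrinks the total mass from `S` to `S'`. The log-sum inequality bounds the gain
`(n - m) λ_{m+1} log (λ_m / λ_{m+1})` by `S' log (S / S')`. Since `λ_m` is the smallest remaining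
weight, the others contribute `log λ_m` plus a nonnegative excess divided by the total mass, which
can only grow when the mass shrinks. -/

theorem mul_log_div_eq_mul_log_sub {y S : ℝ} (hS : S ≠ 0) :
    y * log (y / S) = y * log y - y * log S := by
  rcases eq_or_ne y 0 with rfl | hy
  · simp
  · rw [log_div hy hS, mul_sub]

theorem neg_mul_div_mul_log_div_sub_sum_eq {ι : Type*} {s : Finset ι} {f : ι → ℝ} {K x : ℝ}
    (hS : K * x + ∑ i ∈ s, f i ≠ 0) :
    -K * (x / (K * x + ∑ i ∈ s, f i)) * log (x / (K * x + ∑ i ∈ s, f i)) -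
        ∑ i ∈ s, f i / (K * x + ∑ j ∈ s, f j) * log (f i / (K * x + ∑ j ∈ s, f j)) =
      log (K * x + ∑ i ∈ s, f i) -
        (K * (x * log x) + ∑ i ∈ s, f i * log (f i)) / (K * x + ∑ i ∈ s, f i) := by
  set S := K * x + ∑ i ∈ s, f i with hS_def
  have hterm (y : ℝ) : y / S * log (y / S) = (y * log y - y * log S) / S := by
    rw [div_mul_eq_mul_div, mul_log_div_eq_mul_log_sub hS]
  rw [mul_assoc, hterm, sum_congr rfl fun i _ ↦ hterm (f i), ← sum_div, sum_sub_distrib,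
    ← sum_mul]
  field_simp
  rw [hS_def]
  ring

theorem add_mul_log_div_add_le {x₁ x₂ y₁ y₂ : ℝ} (hx₁ : 0 ≤ x₁) (hx₂ : 0 ≤ x₂)
    (hy₁ : 0 < y₁) (hy₂ : 0 < y₂) :
    (x₁ + x₂) * log ((x₁ + x₂) / (y₁ + y₂)) ≤ x₁ * log (x₁ / y₁) + x₂ * log (x₂ / y₂) := by
  have hY : 0 < y₁ + y₂ := add_pos hy₁ hy₂
  have h := convexOn_mul_log.2 (Set.mem_Ici.2 (div_nonneg hx₁ hy₁.le))
    (Set.mem_Ici.2 (div_nonneg hx₂ hy₂.le)) (div_nonneg hy₁.le hY.le) (div_nonneg hy₂.le hY.le)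
    (by rw [← add_div, div_self hY.ne'])
  have hmean :
      y₁ / (y₁ + y₂) * (x₁ / y₁) + y₂ / (y₁ + y₂) * (x₂ / y₂) = (x₁ + x₂) / (y₁ + y₂) := by
    field_simp
  simp only [smul_eq_mul, hmean] at h
  calc (x₁ + x₂) * log ((x₁ + x₂) / (y₁ + y₂))
      = (y₁ + y₂) * ((x₁ + x₂) / (y₁ + y₂) * log ((x₁ + x₂) / (y₁ + y₂))) := by field_simp
    _ ≤ (y₁ + y₂) * (y₁ / (y₁ + y₂) * (x₁ / y₁ * log (x₁ / y₁)) +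
          y₂ / (y₁ + y₂) * (x₂ / y₂ * log (x₂ / y₂))) := mul_le_mul_of_nonneg_left h hY.le
    _ = x₁ * log (x₁ / y₁) + x₂ * log (x₂ / y₂) := by field_simp

theorem sum_mul_log_le_sum_mul_log {ι : Type*} {s : Finset ι} {f : ι → ℝ} {a : ℝ} (ha : 0 < a)
    (hf : ∀ i ∈ s, a ≤ f i) : (∑ i ∈ s, f i) * log a ≤ ∑ i ∈ s, f i * log (f i) := by
  rw [sum_mul]
  exact sum_le_sum fun i hi ↦
    mul_le_mul_of_nonneg_left (log_le_log ha (hf i hi)) (ha.le.trans (hf i hi))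

/-- With `T` the total mass and `C = ∑ w log w` of some weights `w ≥ a`, lowering `c` of `c + 1`
weights equal to `a` down to `b ≤ a` lowers the entropy `log S - (∑ w log w) / S`. -/
theorem entropy_le_of_replace_weights {c a b T C : ℝ} (hc : 0 < c) (ha : 0 < a) (hb : 0 ≤ b)
    (hba : b ≤ a) (hT : 0 ≤ T) (hC : T * log a ≤ C) :
    log (c * b + (T + a)) - (c * (b * log b) + (C + a * log a)) / (c * b + (T + a)) ≤
      log ((c + 1) * a + T) - ((c + 1) * (a * log a) + C) / ((c + 1) * a + T) := by
  set S := (c + 1) * a + T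
  set S' := c * b + (T + a)
  have hTa : 0 < T + a := by linarith
  have hS' : 0 < S' := by positivity
  have hS'S : S' ≤ S := by nlinarith
  -- the log-sum inequality for the weights `(c b, T + a)` against `(c a, T + a)`
  have hlogsum : c * b * (log a - log b) ≤ S' * (log S - log S') := by
    have h := add_mul_log_div_add_le (mul_nonneg hc.le hb) hTa.le (mul_pos hc ha) hTa
    rw [mul_div_mul_left _ _ hc.ne', div_self hTa.ne', log_one, mul_zero, add_zero,
      show c * a + (T + a) = S by ring, mul_log_div_eq_mul_log_sub (hS'.trans_le hS'S).ne',
      mul_assoc, mul_log_div_eq_mul_log_sub ha.ne'] at h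
    linarith
  have hD : (C - T * log a) / S ≤ (C - T * log a) / S' :=
    div_le_div_of_nonneg_left (by linarith) hS' hS'S
  calc log S' - (c * (b * log b) + (C + a * log a)) / S'
      = log S' - log a - (C - T * log a) / S' + c * b * (log a - log b) / S' := by
        field_simp; ring
    _ ≤ log S' - log a - (C - T * log a) / S + (log S - log S') := by
        gcongr
        rwa [div_le_iff₀' hS']
    _ = log S - ((c + 1) * (a * log a) + C) / S := by
        have hS : 0 < S := hS'.trans_le hS'S
        field_simp
        ring

theorem phi_add_one_eq_log_sub (n m : ℕ) (lam : ℕ → ℝ)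
    (hS : ((n : ℝ) - m) * lam (m + 1) + ∑ i ∈ Icc 1 m, lam i ≠ 0) :
    phi n (m + 1) lam = log (((n : ℝ) - m) * lam (m + 1) + ∑ i ∈ Icc 1 m, lam i) -
      (((n : ℝ) - m) * (lam (m + 1) * log (lam (m + 1))) + ∑ i ∈ Icc 1 m, lam i * log (lam i)) /
        (((n : ℝ) - m) * lam (m + 1) + ∑ i ∈ Icc 1 m, lam i) := by
  have hK : (n : ℝ) - (m + 1 : ℕ) + 1 = n - m := by push_cast; ring
  simp only [phi, Nat.add_sub_cancel, hK]
  exact neg_mul_div_mul_log_div_sub_sum_eq hS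

theorem phi_succ_eq_of_eq_zero {n m : ℕ} (hm : 1 ≤ m) {lam : ℕ → ℝ} (ha : lam m = 0)
    (hb : lam (m + 1) = 0) : phi n (m + 1) lam = phi n m lam := by
  obtain ⟨q, rfl⟩ : ∃ q, m = q + 1 := ⟨m - 1, by omega⟩
  simp [phi, sum_Icc_succ_top, ha, hb]

theorem phi_antitone_step_general {n m : ℕ} (hm : 2 ≤ m) (hmn : m ≤ n - 1)
    (lam : ℕ → ℝ)
    (hmono : ∀ i j, 1 ≤ i → i ≤ j → j ≤ m + 1 → lam j ≤ lam i)
    (hnonneg : ∀ i, 1 ≤ i → i ≤ m + 1 → 0 ≤ lam i) :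
    phi n (m + 1) lam ≤ phi n m lam := by
  obtain ⟨q, rfl⟩ : ∃ q, m = q + 1 := ⟨m - 1, by omega⟩
  have hb : 0 ≤ lam (q + 2) := hnonneg _ (by omega) le_rfl
  have hba : lam (q + 2) ≤ lam (q + 1) := hmono _ _ (by omega) (by omega) le_rfl
  rcases (hnonneg (q + 1) (by omega) (by omega)).eq_or_lt with ha | ha
  · exact (phi_succ_eq_of_eq_zero (by omega) ha.symm (le_antisymm (ha ▸ hba) hb)).le
  have hc : (0 : ℝ) < n - (q + 1) := by
    rw [sub_pos]; exact_mod_cast (show q + 1 < n by omega)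
  have hT : 0 ≤ ∑ i ∈ Icc 1 q, lam i := sum_nonneg fun i hi ↦ by
    obtain ⟨hi₁, hiq⟩ := mem_Icc.1 hi
    exact hnonneg i hi₁ (by omega)
  have hC : (∑ i ∈ Icc 1 q, lam i) * log (lam (q + 1)) ≤ ∑ i ∈ Icc 1 q, lam i * log (lam i) :=
    sum_mul_log_le_sum_mul_log ha fun i hi ↦ by
      obtain ⟨hi₁, hiq⟩ := mem_Icc.1 hi
      exact hmono i (q + 1) hi₁ (by omega) (by omega)
  rw [phi_add_one_eq_log_sub, phi_add_one_eq_log_sub, sum_Icc_succ_top (by omega),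
    sum_Icc_succ_top (by omega)]
  · convert entropy_le_of_replace_weights hc ha hb hba hT hC using 3 <;> push_cast <;> ring
  · apply ne_of_gt; nlinarith
  · apply ne_of_gt
    rw [sum_Icc_succ_top (by omega)]
    push_cast
    nlinarith

/-- For `n ≥ 3`, `2 ≤ m ≤ n − 1`, and `λ_1 ≥ λ_2 ≥ ⋯ ≥ λ_{m+1} ≥ 0` with `λ_1 > 0`, we have
`φ_m(λ_1, …, λ_m) ≥ φ_{m+1}(λ_1, …, λ_m, λ_{m+1})`. -/
theorem phi_antitone_step {n m : ℕ} (hn : 3 ≤ n) (hm : 2 ≤ m) (hmn : m ≤ n - 1)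
    (lam : ℕ → ℝ)
    (hmono : ∀ i j, 1 ≤ i → i ≤ j → j ≤ m + 1 → lam j ≤ lam i)
    (hnonneg : ∀ i, 1 ≤ i → i ≤ m + 1 → 0 ≤ lam i)
    (hpos : 0 < lam 1) :
    phi n (m + 1) lam ≤ phi n m lam :=
  phi_antitone_step_general hm hmn lam hmono hnonneg
end

section
/- Let n ≥ 2 and let λ_1 ≥ λ_2 ≥ ⋯ ≥ λ_n ≥ 0 be reals with λ_1 > 0. Then the spectral entropy at t = 1 is bounded by the two-eigenvalue functional: −Σ_{i=1}^n (λ_i / Σ_{j=1}^n λ_j) · log(λ_i / Σ_{j=1}^n λ_j) ≤ φ_2(λ_1, λ_2), with the convention 0 · log 0 = 0. -/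
open Real Finset

/-!
With `S = λ₁ + (n - 1) λ₂`, `φ₂(λ₁, λ₂)` is the entropy of the flattened probability vector
`q = (λ₁, λ₂, …, λ₂) / S`. By Gibbs' inequality the entropy of `p = λ / ∑ λ` is at most the cross
entropy `-∑ pᵢ log qᵢ = -(p₁ log q₁ + (1 - p₁) log q₂)`, which is nonincreasing in `p₁` because
`q₂ ≤ q₁`. Since `∑ λ ≤ S`, we have `p₁ ≥ q₁`, so the cross entropy is at most its value at
`p₁ = q₁`, which is the entropy of `q`.
-/

lemma negMulLog_le_neg_mul_log_add_sub {p q : ℝ} (hp : 0 ≤ p) (hq : 0 < q) :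
    negMulLog p ≤ -(p * log q) + (q - p) := by
  rcases hp.eq_or_lt with rfl | hp
  · simpa using hq.le
  · have h := mul_le_mul_of_nonneg_left (log_le_sub_one_of_pos (div_pos hq hp)) hp.le
    rw [log_div hq.ne' hp.ne', mul_sub, mul_sub, mul_div_cancel₀ _ hp.ne'] at h
    rw [negMulLog]
    linarith

section Entropy

variable {ι : Type*} {s : Finset ι} {p : ι → ℝ}

theorem sum_negMulLog_le_neg_sum_mul_log {q : ι → ℝ} (hp : ∀ i ∈ s, 0 ≤ p i)
    (hq : ∀ i ∈ s, 0 < q i) (hqp : ∑ i ∈ s, q i ≤ ∑ i ∈ s, p i) :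
    ∑ i ∈ s, negMulLog (p i) ≤ -∑ i ∈ s, p i * log (q i) := by
  have h := sum_le_sum fun i hi => negMulLog_le_neg_mul_log_add_sub (hp i hi) (hq i hi)
  rw [sum_add_distrib, sum_sub_distrib, sum_neg_distrib] at h
  linarith

lemma sum_negMulLog_eq_zero_of_one_le_apply {a : ι} (ha : a ∈ s) (hp : ∀ i ∈ s, 0 ≤ p i)
    (hp1 : ∑ i ∈ s, p i = 1) (hpa : 1 ≤ p a) : ∑ i ∈ s, negMulLog (p i) = 0 := by
  classical
  rw [← add_sum_erase s _ ha] at hp1 ⊢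
  have hrest : ∀ i ∈ s.erase a, p i = 0 :=
    (sum_eq_zero_iff_of_nonneg fun i hi => hp i (mem_of_mem_erase hi)).mp
      (le_antisymm (by linarith) (sum_nonneg fun i hi => hp i (mem_of_mem_erase hi)))
  rw [sum_eq_zero fun i hi => by rw [hrest i hi, negMulLog_zero]]
  simp [show p a = 1 by linarith [sum_eq_zero hrest]]

theorem sum_negMulLog_le_of_le_apply {a : ι} (ha : a ∈ s) (hp : ∀ i ∈ s, 0 ≤ p i)
    (hp1 : ∑ i ∈ s, p i = 1) {x y : ℝ} (hy : 0 ≤ y) (hyx : y ≤ x) (hxp : x ≤ p a)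
    (hxy : x + (#s - 1) * y = 1) :
    ∑ i ∈ s, negMulLog (p i) ≤ negMulLog x + (#s - 1) * negMulLog y := by
  classical
  rcases hy.eq_or_lt with rfl | hy
  · obtain rfl : x = 1 := by linarith
    rw [sum_negMulLog_eq_zero_of_one_le_apply ha hp hp1 hxp]
    simp
  set q : ι → ℝ := Function.update (fun _ => y) a x
  have hqa : q a = x := Function.update_self ..
  have hqi : ∀ i ∈ s.erase a, q i = y := fun i hi =>
    Function.update_of_ne (ne_of_mem_erase hi) ..
  have hq : ∀ i ∈ s, 0 < q i := fun i hi => by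
    rcases eq_or_ne i a with rfl | hia
    · exact hqa ▸ hy.trans_le hyx
    · exact hqi i (mem_erase.2 ⟨hia, hi⟩) ▸ hy
  have hq1 : ∑ i ∈ s, q i = 1 := by
    rw [← add_sum_erase s _ ha, sum_congr rfl hqi, sum_const, nsmul_eq_mul,
      cast_card_erase_of_mem ha, hqa, hxy]
  have hcross : ∑ i ∈ s, p i * log (q i) = p a * log x + (1 - p a) * log y := by
    rw [← add_sum_erase s _ ha] at hp1 ⊢
    rw [sum_congr rfl fun i hi => by rw [hqi i hi], ← sum_mul, hqa, ← hp1, add_sub_cancel_left]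
  have hlog : log y ≤ log x := log_le_log hy hyx
  calc ∑ i ∈ s, negMulLog (p i) ≤ -(p a * log x + (1 - p a) * log y) :=
        hcross ▸ sum_negMulLog_le_neg_sum_mul_log hp hq (hq1.trans hp1.symm).le
    _ ≤ -(x * log x + (1 - x) * log y) := by
        linarith [mul_nonneg (sub_nonneg.2 hxp) (sub_nonneg.2 hlog)]
    _ = negMulLog x + (#s - 1) * negMulLog y := by
        rw [show 1 - x = (#s - 1) * y by linarith]
        simp only [negMulLog]
        ring

end Entropy

lemma phi_two_eq (n : ℕ) (lam : ℕ → ℝ) :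
    phi n 2 lam = negMulLog (lam 1 / ((n - 1) * lam 2 + lam 1)) +
      (n - 1) * negMulLog (lam 2 / ((n - 1) * lam 2 + lam 1)) := by
  simp only [phi, negMulLog, Nat.cast_ofNat, Nat.add_one_sub_one, Icc_self, sum_singleton,
    show (n : ℝ) - 2 + 1 = n - 1 by ring]
  ring

lemma sum_Icc_one_le_add_mul {n : ℕ} (hn : 1 ≤ n) {lam : ℕ → ℝ}
    (hlam : ∀ i ∈ Ioc 1 n, lam i ≤ lam 2) :
    ∑ i ∈ Icc 1 n, lam i ≤ lam 1 + (n - 1) * lam 2 := by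
  have hcard : (#(Ioc 1 n) : ℝ) = n - 1 := by
    rw [Nat.card_Ioc, Nat.cast_sub hn, Nat.cast_one]
  rw [← add_sum_Ioc_eq_sum_Icc hn, ← hcard, ← nsmul_eq_mul]
  gcongr
  exact sum_le_card_nsmul _ _ _ hlam

/-- For `n ≥ 2` and `λ_1 ≥ λ_2 ≥ ⋯ ≥ λ_n ≥ 0` with `λ_1 > 0`, the spectral entropy at `t = 1`
is bounded above by the two-eigenvalue functional:
`−∑_i (λ_i/∑_j λ_j)·log(λ_i/∑_j λ_j) ≤ φ_2(λ_1, λ_2)`. -/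
theorem spectral_entropy_le_phi_two {n : ℕ} (hn : 2 ≤ n) (lam : ℕ → ℝ)
    (hmono : ∀ i j, 1 ≤ i → i ≤ j → j ≤ n → lam j ≤ lam i)
    (hnonneg : ∀ i, 1 ≤ i → i ≤ n → 0 ≤ lam i)
    (hpos : 0 < lam 1) :
    -∑ i ∈ Finset.Icc 1 n,
        (lam i / ∑ j ∈ Finset.Icc 1 n, lam j) *
          Real.log (lam i / ∑ j ∈ Finset.Icc 1 n, lam j) ≤ phi n 2 lam := by
  set T := ∑ j ∈ Icc 1 n, lam j
  set S := ((n : ℝ) - 1) * lam 2 + lam 1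
  have h1n : 1 ∈ Icc 1 n := mem_Icc.2 ⟨le_rfl, by omega⟩
  have hcard : (#(Icc 1 n) : ℝ) = n := by simp
  have h2 : 0 ≤ lam 2 := hnonneg 2 one_le_two hn
  have hT : 0 < T := hpos.trans_le <|
    single_le_sum (fun i hi => hnonneg i (mem_Icc.1 hi).1 (mem_Icc.1 hi).2) h1n
  have hS : 0 < S := by
    have : (1 : ℝ) ≤ n := by exact_mod_cast one_le_two.trans hn
    positivity
  have hTS : T ≤ S := (sum_Icc_one_le_add_mul (by omega) fun i hi =>
    hmono 2 i one_le_two (mem_Ioc.1 hi).1 (mem_Ioc.1 hi).2).trans_eq (add_comm _ _)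
  have hentropy := sum_negMulLog_le_of_le_apply h1n
    (fun i hi => div_nonneg (hnonneg i (mem_Icc.1 hi).1 (mem_Icc.1 hi).2) hT.le)
    (by rw [← sum_div, div_self hT.ne']) (div_nonneg h2 hS.le)
    (div_le_div_of_nonneg_right (hmono 1 2 le_rfl one_le_two hn) hS.le)
    (div_le_div_of_nonneg_left hpos.le hT hTS) (by rw [hcard]; field_simp; ring)
  rw [hcard] at hentropy
  rw [phi_two_eq, ← sum_neg_distrib]
  simpa only [negMulLog, neg_mul] using hentropy
end

section
/- Let n ≥ 2. The function λ ↦ φ_2(1, λ) = −(n − 1)·(λ/(1 + (n−1)λ))·log(λ/(1 + (n−1)λ)) − (1/(1 + (n−1)λ))·log(1/(1 + (n−1)λ)) is concave on the interval (0, 1]. -/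
open Real

/-!
With `c = n - 1`, expanding the logarithms of the quotients gives
`φ₂(1, x) = log (1 + c x) - c x / (1 + c x) * log x`, whose derivative is
`-c log x / (1 + c x)²`. On `(0, 1]` this is the product of the nonnegative decreasing functions
`-log x` and `c / (1 + c x)²`, hence decreasing, so `φ₂(1, ·)` is concave there.
-/

section

/-- `φ₂(1, x)` with `c = n - 1`. -/
noncomputable def phiTwo (c x : ℝ) : ℝ :=
  -c * (x / (1 + c * x)) * log (x / (1 + c * x)) - (1 / (1 + c * x)) * log (1 / (1 + c * x))

variable {c x : ℝ}

lemma phiTwo_eq (hx : 0 < x) (hcx : 0 < 1 + c * x) :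
    phiTwo c x = log (1 + c * x) - c * x / (1 + c * x) * log x := by
  rw [phiTwo, log_div hx.ne' hcx.ne', log_div one_ne_zero hcx.ne', log_one]
  field_simp
  ring

lemma hasDerivAt_phiTwo (hc : 0 ≤ c) (hx : 0 < x) :
    HasDerivAt (phiTwo c) (-c * log x / (1 + c * x) ^ 2) x := by
  have hpos : ∀ y : ℝ, 0 < y → 0 < 1 + c * y := fun y hy => by positivity
  have hcx := hpos x hx
  have hlin : HasDerivAt (fun y => 1 + c * y) c x := by
    simpa using ((hasDerivAt_id x).const_mul c).const_add 1
  have hratio : HasDerivAt (fun y => c * y / (1 + c * y)) (c / (1 + c * x) ^ 2) x := by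
    refine (((hasDerivAt_id' x).const_mul c).div hlin hcx.ne').congr_deriv ?_
    field_simp
    ring
  have hexpanded : HasDerivAt (fun y => log (1 + c * y) - c * y / (1 + c * y) * log y)
      (-c * log x / (1 + c * x) ^ 2) x := by
    refine ((hlin.log hcx.ne').sub (hratio.mul (hasDerivAt_log hx.ne'))).congr_deriv ?_
    field_simp
    ring
  have hagree : (fun y => log (1 + c * y) - c * y / (1 + c * y) * log y) =ᶠ[nhds x] phiTwo c :=
    Filter.eventually_of_mem (Ioi_mem_nhds hx) fun y hy => (phiTwo_eq hy (hpos y hy)).symm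
  exact hexpanded.congr_of_eventuallyEq hagree.symm

lemma antitoneOn_deriv_phiTwo (hc : 0 ≤ c) :
    AntitoneOn (fun x => -c * log x / (1 + c * x) ^ 2) (Set.Ioc 0 1) := by
  intro x ⟨hx, _⟩ y ⟨hy, hy1⟩ hxy
  have hlog_y : 0 ≤ -c * log y := by nlinarith [log_nonpos hy.le hy1]
  have hlog : -c * log y ≤ -c * log x := by nlinarith [log_le_log hx hxy]
  have hden : (1 + c * x) ^ 2 ≤ (1 + c * y) ^ 2 := by gcongr
  exact div_le_div₀ (hlog_y.trans hlog) hlog (by positivity) hden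

theorem concaveOn_phiTwo (hc : 0 ≤ c) : ConcaveOn ℝ (Set.Ioc 0 1) (phiTwo c) := by
  have hderiv : ∀ x ∈ Set.Ioc (0 : ℝ) 1, HasDerivAt (phiTwo c) (-c * log x / (1 + c * x) ^ 2) x :=
    fun x hx => hasDerivAt_phiTwo hc hx.1
  refine AntitoneOn.concaveOn_of_deriv (convex_Ioc 0 1)
    (fun x hx => (hderiv x hx).continuousAt.continuousWithinAt) ?_ ?_
  all_goals rw [interior_Ioc]
  · exact fun x hx => (hderiv x (Set.Ioo_subset_Ioc_self hx)).differentiableAt.differentiableWithinAt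
  · refine ((antitoneOn_deriv_phiTwo hc).mono Set.Ioo_subset_Ioc_self).congr fun x hx => ?_
    exact ((hderiv x (Set.Ioo_subset_Ioc_self hx)).deriv).symm

end

/-- For `n ≥ 2`, the function
`λ ↦ φ_2(1, λ) = −(n−1)·(λ/(1+(n−1)λ))·log(λ/(1+(n−1)λ)) − (1/(1+(n−1)λ))·log(1/(1+(n−1)λ))`
is concave on `(0, 1]`. -/
theorem phi_two_concaveOn {n : ℕ} (hn : 2 ≤ n) :
    ConcaveOn ℝ (Set.Ioc (0 : ℝ) 1) (fun lam : ℝ =>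
      -((n : ℝ) - 1) * (lam / (1 + ((n : ℝ) - 1) * lam)) *
          Real.log (lam / (1 + ((n : ℝ) - 1) * lam)) -
        (1 / (1 + ((n : ℝ) - 1) * lam)) * Real.log (1 / (1 + ((n : ℝ) - 1) * lam))) := by
  have hc : (0 : ℝ) ≤ (n : ℝ) - 1 := by
    have : (2 : ℝ) ≤ n := by exact_mod_cast hn
    linarith
  exact concaveOn_phiTwo hc
end

section
/- Let n ≥ 2, let 1 ≤ m ≤ n − 1, and fix reals λ_1 ≥ λ_2 ≥ ⋯ ≥ λ_m > 0. For λ ∈ (0, λ_m], the function λ ↦ φ_{m+1}(λ_1, …, λ_m, λ) is differentiable with derivative ((n − m)/S(λ)²) · Σ_{i=1}^m λ_i · log(λ_i/λ), where S(λ) = (n − m)·λ + Σ_{i=1}^m λ_i; in particular, this derivative is nonnegative on (0, λ_m]. -/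
/-!
Write `φ_{m+1}` as `c · negMulLog (λ/S) + ∑ᵢ negMulLog (λᵢ/S)` with `c = n − m`. Since
`(λ/S)' = T/S²` and `(λᵢ/S)' = −c λᵢ/S²`, where `T = ∑ λᵢ`, the two `−1` terms of
`negMulLog' = −log − 1` cancel, and what remains is `c/S² · ∑ λᵢ (log(λᵢ/S) − log(λ/S))`,
i.e. `c/S² · ∑ λᵢ log(λᵢ/λ)`. Each summand is nonnegative because `λ ≤ λ_m ≤ λᵢ`.
-/

open Real Finset

section

variable {ι : Type*} (s : Finset ι) {a : ι → ℝ} {c x : ℝ}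

theorem hasDerivAt_negMulLog_sum_div_normalizer (ha : ∀ i ∈ s, a i ≠ 0) (hx : x ≠ 0)
    (hS : c * x + ∑ i ∈ s, a i ≠ 0) :
    HasDerivAt
      (fun y => c * negMulLog (y / (c * y + ∑ i ∈ s, a i)) +
        ∑ i ∈ s, negMulLog (a i / (c * y + ∑ i ∈ s, a i)))
      (c / (c * x + ∑ i ∈ s, a i) ^ 2 * ∑ i ∈ s, a i * log (a i / x)) x := by
  set T := ∑ i ∈ s, a i
  set S := c * x + T
  have hSd : HasDerivAt (fun y => c * y + T) c x := by
    simpa using ((hasDerivAt_id x).const_mul c).add_const T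
  have hu : HasDerivAt (fun y => y / (c * y + T)) (T / S ^ 2) x := by
    refine ((hasDerivAt_id x).div hSd hS).congr_deriv ?_
    simp only [id, S]
    ring
  have hv : ∀ i ∈ s, HasDerivAt (fun y => a i / (c * y + T)) (-(a i * c) / S ^ 2) x := by
    intro i _
    refine ((hasDerivAt_const x (a i)).div hSd hS).congr_deriv ?_
    ring
  have hfirst := ((hasDerivAt_negMulLog (div_ne_zero hx hS)).comp x hu).const_mul c
  have hsum := HasDerivAt.fun_sum fun i hi =>
    (hasDerivAt_negMulLog (div_ne_zero (ha i hi) hS)).comp x (hv i hi)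
  refine (hfirst.fun_add hsum).congr_deriv ?_
  rw [show T / S ^ 2 = ∑ i ∈ s, a i / S ^ 2 from sum_div _ _ _, mul_sum, mul_sum, mul_sum,
    ← sum_add_distrib]
  refine sum_congr rfl fun i hi => ?_
  rw [log_div (ha i hi) hx, log_div hx hS, log_div (ha i hi) hS]
  field_simp
  ring

theorem sum_mul_log_div_nonneg (hx : 0 < x) (ha : ∀ i ∈ s, x ≤ a i) :
    0 ≤ ∑ i ∈ s, a i * log (a i / x) :=
  sum_nonneg fun i hi =>
    mul_nonneg (hx.le.trans (ha i hi)) (log_nonneg ((one_le_div hx).2 (ha i hi)))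

end

theorem phi_succ_hasDerivAt_and_nonneg_general {n m : ℕ} (hm1 : 1 ≤ m)
    (hm2 : m ≤ n - 1) (lam : ℕ → ℝ)
    (hmono : ∀ i j, 1 ≤ i → i ≤ j → j ≤ m → lam j ≤ lam i) :
    ∀ l ∈ Set.Ioc (0 : ℝ) (lam m),
      HasDerivAt
        (fun l' : ℝ =>
          -((n : ℝ) - m) *
              (l' / (((n : ℝ) - m) * l' + ∑ j ∈ Finset.Icc 1 m, lam j)) *
              Real.log (l' / (((n : ℝ) - m) * l' + ∑ j ∈ Finset.Icc 1 m, lam j)) -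
            ∑ i ∈ Finset.Icc 1 m,
              (lam i / (((n : ℝ) - m) * l' + ∑ j ∈ Finset.Icc 1 m, lam j)) *
                Real.log (lam i / (((n : ℝ) - m) * l' + ∑ j ∈ Finset.Icc 1 m, lam j)))
        ((((n : ℝ) - m) / (((n : ℝ) - m) * l + ∑ j ∈ Finset.Icc 1 m, lam j) ^ 2) *
          ∑ i ∈ Finset.Icc 1 m, lam i * Real.log (lam i / l)) l ∧
      0 ≤ (((n : ℝ) - m) / (((n : ℝ) - m) * l + ∑ j ∈ Finset.Icc 1 m, lam j) ^ 2) *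
          ∑ i ∈ Finset.Icc 1 m, lam i * Real.log (lam i / l) := by
  rintro l ⟨hl, hlm⟩
  have hle : ∀ i ∈ Icc 1 m, l ≤ lam i := fun i hi =>
    hlm.trans (hmono i m (mem_Icc.1 hi).1 (mem_Icc.1 hi).2 le_rfl)
  have hc : (0 : ℝ) ≤ n - m := sub_nonneg.2 (mod_cast (by omega : m ≤ n))
  have hT : 0 < ∑ j ∈ Icc 1 m, lam j :=
    sum_pos (fun i hi => hl.trans_le (hle i hi)) ⟨1, mem_Icc.2 ⟨le_rfl, hm1⟩⟩
  have hS : 0 < ((n : ℝ) - m) * l + ∑ j ∈ Icc 1 m, lam j := by positivity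
  refine ⟨?_, mul_nonneg (by positivity) (sum_mul_log_div_nonneg _ hl hle)⟩
  convert hasDerivAt_negMulLog_sum_div_normalizer (Icc 1 m)
    (fun i hi => (hl.trans_le (hle i hi)).ne') hl.ne' hS.ne' using 1
  funext y
  simp only [negMulLog, sum_neg_distrib, neg_mul]
  ring

/-- Fix `λ_1 ≥ ⋯ ≥ λ_m > 0`. On `(0, λ_m]`, the map `λ ↦ φ_{m+1}(λ_1, …, λ_m, λ)` (with
normalizer `S(λ) = (n − m)·λ + ∑_{i=1}^m λ_i`) is differentiable with derivative
`((n − m)/S(λ)²) · ∑_{i=1}^m λ_i·log(λ_i/λ)`, which is nonnegative on `(0, λ_m]`. -/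
theorem phi_succ_hasDerivAt_and_nonneg {n m : ℕ} (hn : 2 ≤ n) (hm1 : 1 ≤ m)
    (hm2 : m ≤ n - 1) (lam : ℕ → ℝ)
    (hmono : ∀ i j, 1 ≤ i → i ≤ j → j ≤ m → lam j ≤ lam i)
    (hpos : ∀ i, 1 ≤ i → i ≤ m → 0 < lam i) :
    ∀ l ∈ Set.Ioc (0 : ℝ) (lam m),
      HasDerivAt
        (fun l' : ℝ =>
          -((n : ℝ) - m) *
              (l' / (((n : ℝ) - m) * l' + ∑ j ∈ Finset.Icc 1 m, lam j)) *
              Real.log (l' / (((n : ℝ) - m) * l' + ∑ j ∈ Finset.Icc 1 m, lam j)) -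
            ∑ i ∈ Finset.Icc 1 m,
              (lam i / (((n : ℝ) - m) * l' + ∑ j ∈ Finset.Icc 1 m, lam j)) *
                Real.log (lam i / (((n : ℝ) - m) * l' + ∑ j ∈ Finset.Icc 1 m, lam j)))
        ((((n : ℝ) - m) / (((n : ℝ) - m) * l + ∑ j ∈ Finset.Icc 1 m, lam j) ^ 2) *
          ∑ i ∈ Finset.Icc 1 m, lam i * Real.log (lam i / l)) l ∧
      0 ≤ (((n : ℝ) - m) / (((n : ℝ) - m) * l + ∑ j ∈ Finset.Icc 1 m, lam j) ^ 2) *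
          ∑ i ∈ Finset.Icc 1 m, lam i * Real.log (lam i / l) :=
  phi_succ_hasDerivAt_and_nonneg_general hm1 hm2 lam hmono
end
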